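/- For all 1 ≤ s < t ≤ L+1 and m ≥ 0 with C_opt(s,t,m) < ∞, the recursive extraction procedure OptRec applied to the dynamic-programming table returns a valid memory-persistent schedule for the subchain from s to t: if the minimum is attained by the checkpoint branch with split point s', it returns the concatenation of (F_ck^s, F_ø^{s+1}, …, F_ø^{s'−1}), an optimal schedule for the subchain from s' to t with memory m−w_a^{s'−1}, and an optimal schedule for the subchain from s to s'−1 with memory m; if the minimum is attained by the store-all branch, it returns F_all^s, followed by an optimal schedule for the subchain from s+1 to t with memory m−w_ā^s, followed by B^s. The returned schedule has peak memory at most m and computation time exactly C_opt(s,t,m). -/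

import Mathlib

/-!
Formal model of the checkpointing problem for back-propagation through a chain
of stages `1, …, L+1` (Beaumont et al., "Optimal checkpointing for heterogeneous
chains").

Data items are activations `a ℓ`, saved internal states `abar ℓ` and gradients
`delta ℓ`.  Operations are `Fall ℓ` (forward storing all intermediate data),
`Fck ℓ` (forward keeping its input), `Fnone ℓ` (forward replacing its input by
its output) and `B ℓ` (backward step).  A schedule for the subchain from `s` to
`t` starts from memory `{a (s-1), delta t}` and must end having produced
`delta (s-1)`.
-/

namespace Checkpoint

inductive Data : Type
  | a (ℓ : ℕ)
  | abar (ℓ : ℕ)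
  | delta (ℓ : ℕ)
  deriving DecidableEq

inductive Op : Type
  | Fall (ℓ : ℕ)
  | Fck (ℓ : ℕ)
  | Fnone (ℓ : ℕ)
  | B (ℓ : ℕ)
  deriving DecidableEq

/-- A chain of `L+1` stages: sizes of activations `wa`, of saved internal
states `wbar`, of gradients `wdelta`; durations `uf`, `ub` and memory
overheads `of`, `ob` of forward and backward operations. -/
structure Chain where
  L : ℕ
  wa : ℕ → ℕ
  wbar : ℕ → ℕ
  wdelta : ℕ → ℕ
  uf : ℕ → ℕ
  ub : ℕ → ℕ
  of : ℕ → ℕ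
  ob : ℕ → ℕ

def Op.stage : Op → ℕ
  | .Fall ℓ => ℓ
  | .Fck ℓ => ℓ
  | .Fnone ℓ => ℓ
  | .B ℓ => ℓ

def Op.duration (c : Chain) : Op → ℕ
  | .Fall ℓ => c.uf ℓ
  | .Fck ℓ => c.uf ℓ
  | .Fnone ℓ => c.uf ℓ
  | .B ℓ => c.ub ℓ

def Data.size (c : Chain) : Data → ℕ
  | .a ℓ => c.wa ℓ
  | .abar ℓ => c.wbar ℓ
  | .delta ℓ => c.wdelta ℓ

/-- Executing one operation on memory `M`: `some M'` if all its inputs are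
present in `M`, `none` otherwise.  `Fall ℓ` and `Fck ℓ` accept `a (ℓ-1)` or
`abar (ℓ-1)` as input and keep it; `Fnone ℓ` consumes `a (ℓ-1)`; `B ℓ`
consumes `delta ℓ` and `abar ℓ`, uses `abar (ℓ-1)` as third input if it is
present (keeping it), and otherwise consumes `a (ℓ-1)`. -/
def Op.exec : Op → Finset Data → Option (Finset Data)
  | .Fall ℓ, M =>
      if Data.a (ℓ - 1) ∈ M ∨ Data.abar (ℓ - 1) ∈ M then
        some (insert (Data.abar ℓ) M) else none
  | .Fck ℓ, M =>
      if Data.a (ℓ - 1) ∈ M ∨ Data.abar (ℓ - 1) ∈ M then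
        some (insert (Data.a ℓ) M) else none
  | .Fnone ℓ, M =>
      if Data.a (ℓ - 1) ∈ M then
        some (insert (Data.a ℓ) (M.erase (Data.a (ℓ - 1)))) else none
  | .B ℓ, M =>
      if Data.delta ℓ ∈ M ∧ Data.abar ℓ ∈ M ∧
          (Data.a (ℓ - 1) ∈ M ∨ Data.abar (ℓ - 1) ∈ M) then
        some (insert (Data.delta (ℓ - 1))
          (if Data.abar (ℓ - 1) ∈ M then
            (M.erase (Data.delta ℓ)).erase (Data.abar ℓ)
          else
            ((M.erase (Data.delta ℓ)).erase (Data.abar ℓ)).erase (Data.a (ℓ - 1))))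
      else none

/-- Executing a list of operations, returning the final memory contents. -/
def execList : Finset Data → List Op → Option (Finset Data)
  | M, [] => some M
  | M, op :: ops => (op.exec M).bind fun M' => execList M' ops

/-- The trace of memory states (before each operation, and after the last). -/
def memTrace : Finset Data → List Op → Option (List (Finset Data))
  | M, [] => some [M]
  | M, op :: ops => (op.exec M).bind fun M' => (memTrace M' ops).map fun tr => M :: tr

/-- Initial memory contents of the subchain from `s` to `t`. -/
def startMem (s t : ℕ) : Finset Data := {Data.a (s - 1), Data.delta t}

/-- Total size of the data in memory, the size of the subchain input
`a (s-1)` being by convention not counted. -/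
def memSize (c : Chain) (s : ℕ) (M : Finset Data) : ℕ :=
  ∑ d ∈ M.erase (Data.a (s - 1)), d.size c

/-- Memory usage during an operation executed from memory `M`, producing
memory `M'`: for a forward operation, the data in memory during its execution
are its input and its output (i.e. `M ∪ M'`); a backward step is executed with
all the data of `M` in memory (its output `delta (ℓ-1)` only materializes at
completion).  The overhead of the operation is added. -/
def opUsage (c : Chain) (s : ℕ) (M M' : Finset Data) : Op → ℕ
  | .Fall ℓ => memSize c s (M ∪ M') + c.of ℓ
  | .Fck ℓ => memSize c s (M ∪ M') + c.of ℓ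
  | .Fnone ℓ => memSize c s (M ∪ M') + c.of ℓ
  | .B ℓ => memSize c s M + c.ob ℓ

/-- Peak memory usage of a sequence of operations run from memory `M`
(`none` if some operation cannot be executed). -/
def peakMem (c : Chain) (s : ℕ) : Finset Data → List Op → Option ℕ
  | _, [] => some 0
  | M, op :: ops =>
      (op.exec M).bind fun M' =>
        (peakMem c s M' ops).map fun p => max (opUsage c s M M' op) p

/-- Total computation time of a schedule. -/
def schedTime (c : Chain) (S : List Op) : ℕ := (S.map (Op.duration c)).sum

/-- A valid schedule for the subchain from `s` to `t`: it only uses operations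
of stages `s, …, t`, every operation's inputs are present in memory when it is
executed, and the schedule ends having produced `delta (s-1)`. -/
def Valid (s t : ℕ) (S : List Op) : Prop :=
  (∀ op ∈ S, s ≤ op.stage ∧ op.stage ≤ t) ∧
  ∃ Mf, execList (startMem s t) S = some Mf ∧ Data.delta (s - 1) ∈ Mf

/-- The peak memory of the schedule `S` for the subchain from `s` to `t` is at
most `m`. -/
def PeakLE (c : Chain) (s t m : ℕ) (S : List Op) : Prop :=
  ∃ p, peakMem c s (startMem s t) S = some p ∧ p ≤ m

/-- Auxiliary predicate for memory persistence: `prev` is the memory state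
before the previous operation (if any) and `M` the current memory state.
A stored value may only be removed by a backward operation using it; hence a
forward operation `Fnone ℓ` may only consume a value `a (ℓ-1)` that was
produced by the immediately preceding operation (a transient value, which was
never stored). -/
def persistAux : Option (Finset Data) → Finset Data → List Op → Prop
  | _, _, [] => True
  | prev, M, op :: ops =>
      (∀ ℓ, op = Op.Fnone ℓ → ∃ P, prev = some P ∧ Data.a (ℓ - 1) ∉ P) ∧
      ∀ M', op.exec M = some M' → persistAux (some M) M' ops

/-- A schedule is memory persistent if every stored value is kept in memory
until it is used by a backward operation. -/
def Persistent (s t : ℕ) (S : List Op) : Prop :=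
  persistAux none (startMem s t) S

/-- `m_∅(s,t)`: memory needed to execute all the forward steps from `s` to `t`
without saving any activation, while `delta t` is stored. -/
def mNone (c : Chain) (s t : ℕ) : ℕ :=
  max (c.wdelta t + c.wa s + c.of s)
    ((Finset.Icc (s + 1) (t - 1)).sup fun j =>
      c.wdelta t + c.wa (j - 1) + c.wa j + c.of j)

/-- `m_all(s,t)`: memory needed to run `Fall s` (with `delta t` stored) and the
backward step `B s`. -/
def mAll (c : Chain) (s t : ℕ) : ℕ :=
  max (c.wdelta t + c.wbar s + c.of s) (c.wdelta s + c.wbar s + c.ob s)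

/-- The dynamic programming recurrence `C_opt(s,t,m)` for the optimal
computation time of a memory-persistent schedule for the subchain from `s` to
`t` under memory bound `m`. -/
noncomputable def Copt (c : Chain) (s t m : ℕ) : ℕ∞ :=
  if h : t ≤ s then
    (if mAll c s s ≤ m then ((c.uf s + c.ub s : ℕ) : ℕ∞) else ⊤)
  else
    min
      (if mNone c s t ≤ m then
        (Finset.Icc (s + 1) t).attach.inf fun s' =>
          ((∑ k ∈ Finset.Ico s s'.1, c.uf k : ℕ) : ℕ∞)
            + Copt c s'.1 t (m - c.wa (s'.1 - 1)) + Copt c s (s'.1 - 1) m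
      else ⊤)
      (if mAll c s t ≤ m then
        ((c.uf s : ℕ) : ℕ∞) + Copt c (s + 1) t (m - c.wbar s) + ((c.ub s : ℕ) : ℕ∞)
      else ⊤)
termination_by t - s
decreasing_by
  · have hs' := s'.2
    simp only [Finset.mem_Icc] at hs'
    omega
  · have hs' := s'.2
    simp only [Finset.mem_Icc] at hs'
    omega
  · omega

end Checkpoint

namespace Checkpoint

/-- An optimal schedule for the subchain from `s` to `t` under memory bound
`m`: a valid memory-persistent schedule with peak memory at most `m` and
computation time exactly `C_opt(s,t,m)`. -/
def OptSched (c : Chain) (s t m : ℕ) (S : List Op) : Prop :=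
  Valid s t S ∧ Persistent s t S ∧ PeakLE c s t m S ∧
    (schedTime c S : ℕ∞) = Copt c s t m

/-!
The schedules returned by `OptRec` are assembled from optimal schedules of the subchains, which
exist whenever `C_opt` is finite, by induction on `t - s` along the recurrence. An optimal
schedule moreover leaves exactly `δ (s-1)` in memory, so that the pieces can be chained.

A schedule for a subchain is replayed inside the larger one by transforming its memory states:
adding the outer input `a (s-1)` (checkpoint branch), and also replacing `a s` by `abar s`
(store-all branch, `liftAll`). An operation of stage `ℓ` only reads and writes data of index
`ℓ - 1` or `ℓ`, so both transformations commute with execution; they cost at most `wa (s'-1)`,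
resp. `wbar s`, of extra memory, which is what the recurrence subtracts from the budget. The one
operation that cannot be replayed on `abar s` is `F_ø (s+1)`, and memory persistence excludes it:
it would consume `a s`, which is stored from the start and never recomputed.
-/

theorem execList_cons (op : Op) (S : List Op) {M M' : Finset Data} (h : op.exec M = some M') :
    execList M (op :: S) = execList M' S := by
  simp [execList, h]

theorem execList_append {M M₁ : Finset Data} {S₁ : List Op} (S₂ : List Op)
    (h : execList M S₁ = some M₁) : execList M (S₁ ++ S₂) = execList M₁ S₂ := by
  induction S₁ generalizing M with
  | nil => cases h; rfl
  | cons op S₁ ih =>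
    obtain ⟨M', hop, h⟩ := Option.bind_eq_some_iff.mp h
    rw [List.cons_append, execList_cons _ _ hop, ih h]

theorem schedTime_append (c : Chain) (S₁ S₂ : List Op) :
    schedTime c (S₁ ++ S₂) = schedTime c S₁ + schedTime c S₂ := by
  simp [schedTime]

def PeakLEFrom (c : Chain) (s m : ℕ) (M : Finset Data) (S : List Op) : Prop :=
  ∃ p, peakMem c s M S = some p ∧ p ≤ m

theorem peakLEFrom_nil (c : Chain) (s m : ℕ) (M : Finset Data) : PeakLEFrom c s m M [] :=
  ⟨0, rfl, Nat.zero_le m⟩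

theorem peakLEFrom_cons_iff {c : Chain} {s m : ℕ} {M : Finset Data} {op : Op} {S : List Op} :
    PeakLEFrom c s m M (op :: S) ↔
      ∃ M', op.exec M = some M' ∧ opUsage c s M M' op ≤ m ∧ PeakLEFrom c s m M' S := by
  simp only [PeakLEFrom, peakMem, Option.bind_eq_some_iff, Option.map_eq_some_iff]
  constructor
  · rintro ⟨_, ⟨M', hop, p, hp, rfl⟩, hle⟩
    exact ⟨M', hop, le_of_max_le_left hle, p, hp, le_of_max_le_right hle⟩
  · rintro ⟨M', hop, hu, p, hp, hle⟩
    exact ⟨_, ⟨M', hop, p, hp, rfl⟩, max_le hu hle⟩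

theorem PeakLEFrom.mono {c : Chain} {s m m' : ℕ} {M : Finset Data} {S : List Op}
    (h : PeakLEFrom c s m M S) (hm : m ≤ m') : PeakLEFrom c s m' M S :=
  let ⟨p, hp, hle⟩ := h; ⟨p, hp, hle.trans hm⟩

theorem PeakLEFrom.append {c : Chain} {s m : ℕ} {M M₁ : Finset Data} {S₁ S₂ : List Op}
    (h : execList M S₁ = some M₁) (h₁ : PeakLEFrom c s m M S₁)
    (h₂ : PeakLEFrom c s m M₁ S₂) :
    PeakLEFrom c s m M (S₁ ++ S₂) := by
  induction S₁ generalizing M with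
  | nil => cases h; exact h₂
  | cons op S₁ ih =>
    obtain ⟨M', hop, hu, h₁⟩ := peakLEFrom_cons_iff.mp h₁
    rw [execList_cons _ _ hop] at h
    exact peakLEFrom_cons_iff.mpr ⟨M', hop, hu, ih h h₁⟩

theorem persistAux_of_none {M : Finset Data} {S : List Op} (h : persistAux none M S)
    (prev : Option (Finset Data)) : persistAux prev M S := by
  cases S with
  | nil => trivial
  | cons op S => exact ⟨fun ℓ hop => absurd (h.1 ℓ hop) (by simp), h.2⟩

theorem persistAux_cons {prev : Option (Finset Data)} {M M' : Finset Data} {op : Op}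
    {S : List Op} (hop : ∀ ℓ, op ≠ Op.Fnone ℓ) (h : op.exec M = some M')
    (hS : persistAux (some M) M' S) : persistAux prev M (op :: S) :=
  ⟨fun ℓ h' => absurd h' (hop ℓ),
    fun _ h' => Option.some_injective _ (h'.symm.trans h) ▸ hS⟩

theorem persistAux_append {prev : Option (Finset Data)} {M M₁ : Finset Data} {S₁ S₂ : List Op}
    (h : execList M S₁ = some M₁) (h₁ : persistAux prev M S₁)
    (h₂ : persistAux none M₁ S₂) :
    persistAux prev M (S₁ ++ S₂) := by
  induction S₁ generalizing prev M with
  | nil => cases h; exact persistAux_of_none h₂ prev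
  | cons op S₁ ih =>
    obtain ⟨M', hop, h⟩ := Option.bind_eq_some_iff.mp h
    refine ⟨h₁.1, fun M'' hop' => ?_⟩
    cases hop.symm.trans hop'
    exact ih h (h₁.2 M' hop)

theorem memSize_le_sum (c : Chain) (s : ℕ) (M : Finset Data) :
    memSize c s M ≤ ∑ d ∈ M, d.size c :=
  Finset.sum_le_sum_of_subset (Finset.erase_subset _ M)

theorem sum_le_memSize_add (c : Chain) (s : ℕ) (M : Finset Data) :
    ∑ d ∈ M, d.size c ≤ memSize c s M + c.wa (s - 1) := by
  by_cases h : Data.a (s - 1) ∈ M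
  · rw [memSize, ← Finset.sum_erase_add M _ h]; rfl
  · rw [memSize, Finset.erase_eq_of_notMem h]; omega

theorem memSize_insert_input (c : Chain) (s : ℕ) (M : Finset Data) :
    memSize c s (insert (Data.a (s - 1)) M) = memSize c s M := by
  rw [memSize, memSize, Finset.erase_insert_eq_erase]

theorem memSize_insert_le (c : Chain) (s : ℕ) (d : Data) (M : Finset Data) :
    memSize c s (insert d M) ≤ d.size c + memSize c s M := by
  rw [memSize, memSize]
  by_cases hd : d = Data.a (s - 1)
  · rw [hd, Finset.erase_insert_eq_erase]; omega
  · rw [Finset.erase_insert_of_ne hd]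
    by_cases hM : d ∈ M.erase (Data.a (s - 1))
    · rw [Finset.insert_eq_of_mem hM]; omega
    · rw [Finset.sum_insert hM]

theorem memSize_insert_of_notMem {c : Chain} {s : ℕ} {d : Data} {M : Finset Data}
    (hd : d ≠ Data.a (s - 1)) (hM : d ∉ M) :
    memSize c s (insert d M) = d.size c + memSize c s M := by
  rw [memSize, memSize, Finset.erase_insert_of_ne hd,
    Finset.sum_insert (fun h => hM (Finset.mem_of_mem_erase h))]

theorem memSize_startMem (c : Chain) (s t : ℕ) : memSize c s (startMem s t) = c.wdelta t := by
  rw [startMem, memSize_insert_input]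
  simp [memSize, Data.size]

theorem memSize_insert_input_le (c : Chain) (s s' : ℕ) (M : Finset Data) :
    memSize c s (insert (Data.a (s - 1)) M) ≤ memSize c s' M + c.wa (s' - 1) := by
  rw [memSize_insert_input]
  exact (memSize_le_sum c s M).trans (sum_le_memSize_add c s' M)

def Data.index : Data → ℕ
  | .a ℓ | .abar ℓ | .delta ℓ => ℓ

theorem Op.exec_insert_of_index_lt {op : Op} {d : Data} {M M' : Finset Data}
    (hd : d.index + 1 < op.stage) (h : op.exec M = some M') :
    op.exec (insert d M) = some (insert d M') := by
  cases op <;> cases d <;> simp only [Data.index, Op.stage] at hd <;>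
    simp only [Op.exec] at h ⊢ <;> split_ifs at h ⊢ <;>
    simp_all only [Option.some.injEq, Finset.ext_iff, Finset.mem_insert, Finset.mem_erase] <;>
    grind

theorem Op.exec_erase_of_index_lt {op : Op} {d : Data} {M M' : Finset Data}
    (hd : d.index + 1 < op.stage) (h : op.exec M = some M') :
    op.exec (M.erase d) = some (M'.erase d) := by
  cases op <;> cases d <;> simp only [Data.index, Op.stage] at hd <;>
    simp only [Op.exec] at h ⊢ <;> split_ifs at h ⊢ <;>
    simp_all only [Option.some.injEq, Finset.ext_iff, Finset.mem_insert, Finset.mem_erase] <;>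
    grind

theorem Op.mem_of_exec_a {op : Op} {ℓ : ℕ} {M M' : Finset Data} (hℓ : ℓ < op.stage)
    (h : op.exec M = some M') (hmem : Data.a ℓ ∈ M') : Data.a ℓ ∈ M := by
  cases op <;> simp only [Op.stage] at hℓ <;> simp only [Op.exec] at h <;> split_ifs at h <;>
    cases h <;> simp only [Finset.mem_insert, Finset.mem_erase] at hmem <;> grind

def CommutesWithExec (φ : Finset Data → Finset Data) (S : List Op) : Prop :=
  ∀ op ∈ S, ∀ {M M'}, op.exec M = some M' → op.exec (φ M) = some (φ M')

namespace CommutesWithExec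

variable {φ : Finset Data → Finset Data} {op : Op} {S : List Op}

theorem tail (h : CommutesWithExec φ (op :: S)) : CommutesWithExec φ S :=
  fun op' hop' => h op' (List.mem_cons_of_mem op hop')

theorem execList_eq (h : CommutesWithExec φ S) {M Mf : Finset Data} (hS : execList M S = some Mf) :
    execList (φ M) S = some (φ Mf) := by
  induction S generalizing M with
  | nil => cases hS; rfl
  | cons op S ih =>
    obtain ⟨M', hop, hS⟩ := Option.bind_eq_some_iff.mp hS
    rw [execList_cons _ _ (h op List.mem_cons_self hop)]
    exact ih h.tail hS

theorem peakLEFrom_add (h : CommutesWithExec φ S) {c : Chain} {s s' m w : ℕ}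
    (hunion : ∀ M N, φ (M ∪ N) = φ M ∪ φ N)
    (hsize : ∀ N, memSize c s (φ N) ≤ memSize c s' N + w) {M : Finset Data}
    (hS : PeakLEFrom c s' m M S) : PeakLEFrom c s (m + w) (φ M) S := by
  induction S generalizing M with
  | nil => exact peakLEFrom_nil c s _ _
  | cons op S ih =>
    obtain ⟨M', hop, hu, hS⟩ := peakLEFrom_cons_iff.mp hS
    have husage : opUsage c s (φ M) (φ M') op ≤ opUsage c s' M M' op + w := by
      cases op <;> simp only [opUsage, ← hunion] <;> linarith [hsize (M ∪ M'), hsize M]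
    exact peakLEFrom_cons_iff.mpr ⟨φ M', h op List.mem_cons_self hop, by omega, ih h.tail hS⟩

theorem persistAux_map (h : CommutesWithExec φ S)
    (hfresh : ∀ ℓ, Op.Fnone ℓ ∈ S → ∀ P, Data.a (ℓ - 1) ∉ P →
      Data.a (ℓ - 1) ∉ φ P)
    {prev : Option (Finset Data)} {M Mf : Finset Data} (hexec : execList M S = some Mf)
    (hS : persistAux prev M S) :
    persistAux (prev.map φ) (φ M) S := by
  induction S generalizing prev M with
  | nil => trivial
  | cons op S ih =>
    refine ⟨fun ℓ hF => ?_, fun M'' hop' => ?_⟩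
    · obtain ⟨P, rfl, hP⟩ := hS.1 ℓ hF
      exact ⟨φ P, rfl, hfresh ℓ (hF ▸ List.mem_cons_self) P hP⟩
    · obtain ⟨M', hop, hexec⟩ := Option.bind_eq_some_iff.mp hexec
      cases (h op List.mem_cons_self hop).symm.trans hop'
      exact ih h.tail (fun ℓ hF => hfresh ℓ (List.mem_cons_of_mem op hF)) hexec (hS.2 M' hop)

end CommutesWithExec

def liftAll (s : ℕ) (M : Finset Data) : Finset Data :=
  insert (Data.abar s) (insert (Data.a (s - 1)) (M.erase (Data.a s)))

theorem Op.exec_liftAll {s : ℕ} {op : Op} {M M' : Finset Data} (hst : s + 1 ≤ op.stage)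
    (hF : op ≠ Op.Fnone (s + 1)) (h : op.exec M = some M') :
    op.exec (liftAll s M) = some (liftAll s M') := by
  rcases hst.lt_or_eq with hlt | heq
  · have hinput : (Data.a (s - 1)).index + 1 < op.stage := by simp only [Data.index]; omega
    exact Op.exec_insert_of_index_lt hlt <| Op.exec_insert_of_index_lt hinput <|
      Op.exec_erase_of_index_lt hlt h
  · cases op <;> simp only [Op.stage] at heq <;> subst heq <;>
    simp only [liftAll, Op.exec, Nat.add_sub_cancel] at h hF ⊢ <;> split_ifs at h ⊢ <;>
    simp_all only [Option.some.injEq, Finset.ext_iff, Finset.mem_insert, Finset.mem_erase] <;>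
    grind

theorem liftAll_union (s : ℕ) (M N : Finset Data) :
    liftAll s (M ∪ N) = liftAll s M ∪ liftAll s N := by
  simp only [liftAll, Finset.erase_union_distrib, Finset.insert_union_distrib]

theorem memSize_liftAll_le (c : Chain) (s : ℕ) (M : Finset Data) :
    memSize c s (liftAll s M) ≤ memSize c (s + 1) M + c.wbar s := calc
  memSize c s (liftAll s M)
      ≤ c.wbar s + memSize c s (insert (Data.a (s - 1)) (M.erase (Data.a s))) :=
    memSize_insert_le c s (Data.abar s) _
  _ = c.wbar s + memSize c s (M.erase (Data.a s)) := by rw [memSize_insert_input]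
  _ ≤ c.wbar s + ∑ d ∈ M.erase (Data.a s), d.size c := by grw [memSize_le_sum]
  _ = memSize c (s + 1) M + c.wbar s := by rw [memSize, Nat.add_sub_cancel, add_comm]

theorem liftAll_startMem (s t : ℕ) :
    liftAll s (startMem (s + 1) t) = insert (Data.abar s) (startMem s t) := by
  ext d
  cases d <;> simp [liftAll, startMem]

theorem liftAll_delta (s : ℕ) :
    liftAll s {Data.delta s} = insert (Data.abar s) (startMem s s) := by
  ext d
  cases d <;> simp [liftAll, startMem]

theorem commutesWithExec_insert {s : ℕ} (hs : 1 ≤ s) {S : List Op}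
    (hst : ∀ op ∈ S, s + 1 ≤ op.stage) : CommutesWithExec (insert (Data.a (s - 1))) S :=
  fun op hop _ _ h =>
    Op.exec_insert_of_index_lt (by have := hst op hop; simp only [Data.index]; omega) h

theorem commutesWithExec_liftAll {s : ℕ} {S : List Op} (hst : ∀ op ∈ S, s + 1 ≤ op.stage)
    (hF : Op.Fnone (s + 1) ∉ S) : CommutesWithExec (liftAll s) S :=
  fun op hop _ _ h => Op.exec_liftAll (hst op hop) (ne_of_mem_of_not_mem hop hF) h

theorem Fnone_succ_notMem_of_persistAux {s : ℕ} {S : List Op} {prev : Option (Finset Data)}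
    {M Mf : Finset Data} (hst : ∀ op ∈ S, s + 1 ≤ op.stage) (hexec : execList M S = some Mf)
    (hpers : persistAux prev M S)
    (hprev : ∀ P, prev = some P → Data.a s ∈ M → Data.a s ∈ P) :
    Op.Fnone (s + 1) ∉ S := by
  induction S generalizing prev M with
  | nil => simp
  | cons op S ih =>
    obtain ⟨M', hop, hexec⟩ := Option.bind_eq_some_iff.mp hexec
    rintro (_ | ⟨_, hmem⟩)
    · obtain ⟨P, hP, hsP⟩ := hpers.1 (s + 1) rfl
      have hsM : Data.a s ∈ M := by
        by_contra hsM
        simp [Op.exec, hsM] at hop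
      exact hsP (hprev P hP hsM)
    · refine ih (fun op' h' => hst op' (List.mem_cons_of_mem op h')) hexec (hpers.2 M' hop)
        (fun P hP hsM' => ?_) hmem
      cases hP
      exact Op.mem_of_exec_a (hst op List.mem_cons_self) hop hsM'

theorem Valid.Fnone_notMem {s t : ℕ} {S : List Op} (hv : Valid (s + 1) t S)
    (hp : Persistent (s + 1) t S) : Op.Fnone (s + 1) ∉ S :=
  let ⟨hst, _, hexec, _⟩ := hv
  Fnone_succ_notMem_of_persistAux (fun op h => (hst op h).1) hexec hp (by simp)

theorem Copt_self {c : Chain} {s m : ℕ} (hm : mAll c s s ≤ m) :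
    Copt c s s m = ((c.uf s + c.ub s : ℕ) : ℕ∞) := by
  rw [Copt, dif_pos le_rfl, if_pos hm]

theorem mAll_le_of_Copt_self_lt_top {c : Chain} {s m : ℕ} (h : Copt c s s m < ⊤) :
    mAll c s s ≤ m := by
  by_contra hm
  rw [Copt, dif_pos le_rfl, if_neg hm] at h
  exact lt_irrefl _ h

noncomputable def checkpointCost (c : Chain) (s t m : ℕ) : ℕ∞ :=
  if mNone c s t ≤ m then
    (Finset.Icc (s + 1) t).attach.inf fun s' =>
      ((∑ k ∈ Finset.Ico s s'.1, c.uf k : ℕ) : ℕ∞)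
        + Copt c s'.1 t (m - c.wa (s'.1 - 1)) + Copt c s (s'.1 - 1) m
  else ⊤

noncomputable def storeAllCost (c : Chain) (s t m : ℕ) : ℕ∞ :=
  if mAll c s t ≤ m then
    ((c.uf s : ℕ) : ℕ∞) + Copt c (s + 1) t (m - c.wbar s) + ((c.ub s : ℕ) : ℕ∞)
  else ⊤

theorem Copt_of_lt {c : Chain} {s t m : ℕ} (hst : s < t) :
    Copt c s t m = min (checkpointCost c s t m) (storeAllCost c s t m) := by
  rw [Copt, dif_neg (not_le.mpr hst)]
  rfl

theorem Copt_eq_checkpoint_or_storeAll {c : Chain} {s t m : ℕ} (hst : s < t)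
    (hfin : Copt c s t m < ⊤) :
    (∃ s', s + 1 ≤ s' ∧ s' ≤ t ∧ mNone c s t ≤ m ∧
      Copt c s t m = ((∑ k ∈ Finset.Ico s s', c.uf k : ℕ) : ℕ∞)
          + Copt c s' t (m - c.wa (s' - 1)) + Copt c s (s' - 1) m) ∨
    (mAll c s t ≤ m ∧
      Copt c s t m = ((c.uf s : ℕ) : ℕ∞) + Copt c (s + 1) t (m - c.wbar s)
          + ((c.ub s : ℕ) : ℕ∞)) := by
  rw [Copt_of_lt hst] at hfin ⊢
  rcases min_choice (checkpointCost c s t m) (storeAllCost c s t m) with h | h <;>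
    rw [h] at hfin ⊢
  · rw [checkpointCost] at hfin ⊢
    split_ifs at hfin ⊢ with hm
    · obtain ⟨⟨s', hs'⟩, -, hinf⟩ := Finset.exists_mem_eq_inf (α := ℕ∞) _
        (Finset.attach_nonempty_iff.mpr (Finset.nonempty_Icc.mpr hst.nat_succ_le)) _
      rw [Finset.mem_Icc] at hs'
      exact Or.inl ⟨s', hs'.1, hs'.2, hm, hinf⟩
    · exact absurd hfin (lt_irrefl _)
  · rw [storeAllCost] at hfin ⊢
    split_ifs at hfin ⊢ with hm
    · exact Or.inr ⟨hm, rfl⟩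
    · exact absurd hfin (lt_irrefl _)

theorem le_mNone {c : Chain} {s t j : ℕ} (hsj : s + 1 ≤ j) (hjt : j < t) :
    c.wdelta t + c.wa (j - 1) + c.wa j + c.of j ≤ mNone c s t :=
  (Finset.le_sup (f := fun j => c.wdelta t + c.wa (j - 1) + c.wa j + c.of j)
    (Finset.mem_Icc.mpr ⟨hsj, by omega⟩)).trans (le_max_right _ _)

theorem wa_le_mNone {c : Chain} {s t j : ℕ} (hsj : s ≤ j) (hjt : j < t) :
    c.wa j ≤ mNone c s t := by
  rcases hsj.eq_or_lt with rfl | hsj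
  · exact le_trans (by omega) (le_max_left _ _)
  · exact le_trans (by omega) (le_mNone (j := j) hsj hjt)

theorem a_notMem_startMem {s j : ℕ} (hs : 1 ≤ s) (hj : s ≤ j) (t : ℕ) :
    Data.a j ∉ startMem s t := by
  simp only [startMem, Finset.mem_insert, Data.a.injEq, Finset.mem_singleton, reduceCtorEq,
    or_false]
  omega

theorem exec_Fall_startMem (s t : ℕ) :
    (Op.Fall s).exec (startMem s t) = some (insert (Data.abar s) (startMem s t)) := by
  simp [Op.exec, startMem]

theorem exec_Fck_startMem (s t : ℕ) :
    (Op.Fck s).exec (startMem s t) = some (insert (Data.a s) (startMem s t)) := by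
  simp [Op.exec, startMem]

theorem exec_B_insert_abar_startMem {s : ℕ} (hs : 1 ≤ s) :
    (Op.B s).exec (insert (Data.abar s) (startMem s s)) = some {Data.delta (s - 1)} := by
  have hbar : Data.abar (s - 1) ∉ insert (Data.abar s) (startMem s s) := by
    simp only [startMem, Finset.mem_insert, Data.abar.injEq, reduceCtorEq, Finset.mem_singleton,
      or_false]
    omega
  rw [Op.exec, if_pos (by simp [startMem]), if_neg hbar]
  congr 1
  ext d
  cases d <;> simp [startMem]

theorem memSize_insert_abar_startMem (c : Chain) (s t : ℕ) :
    memSize c s (insert (Data.abar s) (startMem s t)) = c.wbar s + c.wdelta t := by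
  rw [memSize_insert_of_notMem (by simp) (by simp [startMem]), memSize_startMem]
  rfl

theorem opUsage_insert_of_ne_B (c : Chain) (s : ℕ) {op : Op} (hop : ∀ ℓ, op ≠ Op.B ℓ)
    (d : Data) (M : Finset Data) :
    opUsage c s M (insert d M) op = memSize c s (insert d M) + c.of op.stage := by
  cases op <;> simp_all [opUsage, Op.stage]

theorem optSched_base {c : Chain} {s m : ℕ} (hs : 1 ≤ s) (hm : mAll c s s ≤ m) :
    OptSched c s s m [Op.Fall s, Op.B s] ∧
      execList (startMem s s) [Op.Fall s, Op.B s] = some {Data.delta (s - 1)} := by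
  have hexec : execList (startMem s s) [Op.Fall s, Op.B s] = some {Data.delta (s - 1)} := by
    rw [execList_cons _ _ (exec_Fall_startMem s s),
      execList_cons _ _ (exec_B_insert_abar_startMem hs)]
    rfl
  have hmAll := hm
  simp only [mAll, max_le_iff] at hmAll
  refine ⟨⟨⟨by simp [Op.stage], _, hexec, by simp⟩, ?_, ?_, ?_⟩, hexec⟩
  · exact persistAux_cons (by simp) (exec_Fall_startMem s s)
      (persistAux_cons (by simp) (exec_B_insert_abar_startMem hs) trivial)
  · refine peakLEFrom_cons_iff.mpr ⟨_, exec_Fall_startMem s s, ?_,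
      peakLEFrom_cons_iff.mpr ⟨_, exec_B_insert_abar_startMem hs, ?_, peakLEFrom_nil ..⟩⟩
    · rw [opUsage_insert_of_ne_B _ _ (by simp), memSize_insert_abar_startMem]
      simp only [Op.stage]; omega
    · simp only [opUsage, memSize_insert_abar_startMem]; omega
  · simp [schedTime, Op.duration, Copt_self hm]

theorem replay_liftAll {c : Chain} {s t m : ℕ} {S : List Op} (hv : Valid (s + 1) t S)
    (hp : Persistent (s + 1) t S) (hpk : PeakLE c (s + 1) t m S)
    (hx : execList (startMem (s + 1) t) S = some {Data.delta s}) :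
    execList (insert (Data.abar s) (startMem s t)) S =
        some (insert (Data.abar s) (startMem s s)) ∧
      persistAux none (insert (Data.abar s) (startMem s t)) S ∧
      PeakLEFrom c s (m + c.wbar s) (insert (Data.abar s) (startMem s t)) S := by
  have hF := hv.Fnone_notMem hp
  have hsim : CommutesWithExec (liftAll s) S :=
    commutesWithExec_liftAll (fun op h => (hv.1 op h).1) hF
  have hfresh : ∀ ℓ, Op.Fnone ℓ ∈ S → ∀ P, Data.a (ℓ - 1) ∉ P →
      Data.a (ℓ - 1) ∉ liftAll s P := by
    intro ℓ hℓ P hP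
    have : s + 1 < ℓ := lt_of_le_of_ne (hv.1 _ hℓ).1 (by rintro rfl; exact hF hℓ)
    simp only [liftAll, Finset.mem_insert, reduceCtorEq, Data.a.injEq, Finset.mem_erase, ne_eq,
      hP, and_false, or_false, false_or]
    omega
  rw [← liftAll_startMem s t, ← liftAll_delta]
  exact ⟨hsim.execList_eq hx, hsim.persistAux_map hfresh hx hp,
    hsim.peakLEFrom_add (liftAll_union s) (memSize_liftAll_le c s) hpk⟩

theorem optSched_storeAll {c : Chain} {s t m : ℕ} {S₁ : List Op} (hs : 1 ≤ s) (hst : s < t)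
    (hm : mAll c s t ≤ m)
    (heq : Copt c s t m = ((c.uf s : ℕ) : ℕ∞) + Copt c (s + 1) t (m - c.wbar s)
      + ((c.ub s : ℕ) : ℕ∞))
    (h₁ : OptSched c (s + 1) t (m - c.wbar s) S₁)
    (hx₁ : execList (startMem (s + 1) t) S₁ = some {Data.delta s}) :
    OptSched c s t m (Op.Fall s :: (S₁ ++ [Op.B s])) ∧
      execList (startMem s t) (Op.Fall s :: (S₁ ++ [Op.B s])) = some {Data.delta (s - 1)} := by
  obtain ⟨hv, hp, hpk, htime⟩ := h₁
  obtain ⟨hx₁', hp₁', hpk₁'⟩ := replay_liftAll hv hp hpk hx₁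
  have hexec : execList (startMem s t) (Op.Fall s :: (S₁ ++ [Op.B s])) =
      some {Data.delta (s - 1)} := by
    rw [execList_cons _ _ (exec_Fall_startMem s t), execList_append _ hx₁',
      execList_cons _ _ (exec_B_insert_abar_startMem hs)]
    rfl
  have hmAll := hm
  simp only [mAll, max_le_iff] at hmAll
  refine ⟨⟨⟨?_, _, hexec, by simp⟩, ?_, ?_, ?_⟩, hexec⟩
  · simp only [List.mem_cons, List.mem_append, List.not_mem_nil, or_false]
    rintro op (rfl | h | rfl)
    · exact ⟨le_rfl, hst.le⟩
    · have := hv.1 op h; omega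
    · exact ⟨le_rfl, hst.le⟩
  · exact persistAux_cons (by simp) (exec_Fall_startMem s t) (persistAux_append hx₁'
      (persistAux_of_none hp₁' _)
      (persistAux_cons (by simp) (exec_B_insert_abar_startMem hs) trivial))
  · refine peakLEFrom_cons_iff.mpr ⟨_, exec_Fall_startMem s t, ?_,
      (hpk₁'.mono (by omega)).append hx₁'
        (peakLEFrom_cons_iff.mpr ⟨_, exec_B_insert_abar_startMem hs, ?_, peakLEFrom_nil ..⟩)⟩
    · rw [opUsage_insert_of_ne_B _ _ (by simp), memSize_insert_abar_startMem]
      simp only [Op.stage]; omega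
    · simp only [opUsage, memSize_insert_abar_startMem]; omega
  · have hsplit : schedTime c (Op.Fall s :: (S₁ ++ [Op.B s])) =
        c.uf s + schedTime c S₁ + c.ub s := by
      simp only [schedTime, List.map_cons, List.map_append, List.map_nil, List.sum_cons,
        List.sum_append, List.sum_nil, Op.duration]
      ring
    rw [hsplit, heq, ← htime]
    push_cast
    rfl

theorem exec_Fnone_insert {i : ℕ} {M : Finset Data} (h : Data.a i ∉ M) :
    (Op.Fnone (i + 1)).exec (insert (Data.a i) M) = some (insert (Data.a (i + 1)) M) := by
  simp [Op.exec, Finset.erase_insert h]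

theorem execList_Fnone_range' {i : ℕ} {M : Finset Data} (hM : ∀ j, i ≤ j → Data.a j ∉ M)
    (k : ℕ) : execList (insert (Data.a i) M) ((List.range' (i + 1) k).map Op.Fnone) =
      some (insert (Data.a (i + k)) M) := by
  induction k generalizing i with
  | zero => rfl
  | succ k ih =>
    rw [List.range'_succ, List.map_cons, execList_cons _ _ (exec_Fnone_insert (hM i le_rfl)),
      ih (fun j hj => hM j (by omega)), Nat.add_right_comm, Nat.add_assoc]

theorem persistAux_Fnone_range' {i : ℕ} {M P : Finset Data}
    (hM : ∀ j, i ≤ j → Data.a j ∉ M) (hP : Data.a i ∉ P) (k : ℕ) :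
    persistAux (some P) (insert (Data.a i) M) ((List.range' (i + 1) k).map Op.Fnone) := by
  induction k generalizing i P with
  | zero => trivial
  | succ k ih =>
    refine ⟨fun ℓ h => ⟨P, rfl, ?_⟩, fun M' hop => ?_⟩
    · cases h; simpa using hP
    · cases (exec_Fnone_insert (hM i le_rfl)).symm.trans hop
      exact ih (fun j hj => hM j (by omega)) (by simpa using hM (i + 1) (by omega))

theorem peakLEFrom_Fnone_range' {c : Chain} {s t i : ℕ} (hs : 1 ≤ s) (hi : s ≤ i) (k : ℕ)
    (hk : i + k < t) : PeakLEFrom c s (mNone c s t) (insert (Data.a i) (startMem s t))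
      ((List.range' (i + 1) k).map Op.Fnone) := by
  induction k generalizing i with
  | zero => exact peakLEFrom_nil ..
  | succ k ih =>
    have hM : ∀ j, s ≤ j → Data.a j ∉ startMem s t := fun j hj => a_notMem_startMem hs hj t
    refine peakLEFrom_cons_iff.mpr
      ⟨_, exec_Fnone_insert (hM i hi), ?_, ih (i := i + 1) (by omega) (by omega)⟩
    have hunion : insert (Data.a i) (startMem s t) ∪ insert (Data.a (i + 1)) (startMem s t) =
        insert (Data.a i) (insert (Data.a (i + 1)) (startMem s t)) := by
      rw [Finset.insert_union, Finset.union_insert, Finset.union_self]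
    have hne : ∀ j, s ≤ j → Data.a j ≠ Data.a (s - 1) := by
      simp only [ne_eq, Data.a.injEq]; omega
    rw [opUsage, hunion, memSize_insert_of_notMem (hne i hi) (by simpa using hM i hi),
      memSize_insert_of_notMem (hne (i + 1) (by omega)) (hM (i + 1) (by omega)),
      memSize_startMem]
    have := le_mNone (c := c) (s := s) (t := t) (j := i + 1) (by omega) (by omega)
    simp only [Data.size, Nat.add_sub_cancel] at this ⊢
    omega

def checkpointPrefix (s s' : ℕ) : List Op :=
  Op.Fck s :: (List.range' (s + 1) (s' - s - 1)).map Op.Fnone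

theorem stage_mem_checkpointPrefix {s s' : ℕ} (hs' : s < s') {op : Op}
    (h : op ∈ checkpointPrefix s s') : s ≤ op.stage ∧ op.stage < s' := by
  simp only [checkpointPrefix, List.mem_cons, List.mem_map, List.mem_range'_1] at h
  rcases h with rfl | ⟨j, hj, rfl⟩ <;> simp only [Op.stage] <;> omega

theorem execList_checkpointPrefix {s s' : ℕ} (hs : 1 ≤ s) (hs' : s < s') (t : ℕ) :
    execList (startMem s t) (checkpointPrefix s s') =
      some (insert (Data.a (s' - 1)) (startMem s t)) := by
  rw [checkpointPrefix, execList_cons _ _ (exec_Fck_startMem s t),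
    execList_Fnone_range' (fun j hj => a_notMem_startMem hs hj t)]
  congr 3
  omega

theorem persistAux_checkpointPrefix {s : ℕ} (hs : 1 ≤ s) (s' t : ℕ)
    (prev : Option (Finset Data)) : persistAux prev (startMem s t) (checkpointPrefix s s') :=
  persistAux_cons (by simp) (exec_Fck_startMem s t)
    (persistAux_Fnone_range' (fun j hj => a_notMem_startMem hs hj t)
      (a_notMem_startMem hs le_rfl t) _)

theorem peakLEFrom_checkpointPrefix {c : Chain} {s s' t : ℕ} (hs : 1 ≤ s) (hs' : s < s')
    (hs't : s' ≤ t) :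
    PeakLEFrom c s (mNone c s t) (startMem s t) (checkpointPrefix s s') := by
  refine peakLEFrom_cons_iff.mpr ⟨_, exec_Fck_startMem s t, ?_,
    peakLEFrom_Fnone_range' hs le_rfl _ (by omega)⟩
  rw [opUsage_insert_of_ne_B _ _ (by simp),
    memSize_insert_of_notMem (by simp only [ne_eq, Data.a.injEq]; omega)
      (a_notMem_startMem hs le_rfl t), memSize_startMem]
  exact le_trans (by simp only [Data.size, Op.stage]; omega) (le_max_left _ _)

theorem schedTime_checkpointPrefix (c : Chain) {s s' : ℕ} (hs' : s < s') :
    schedTime c (checkpointPrefix s s') = ∑ k ∈ Finset.Ico s s', c.uf k := by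
  obtain ⟨n, rfl⟩ := Nat.exists_eq_add_of_lt hs'
  rw [Nat.add_assoc, ← List.toFinset_range'_1, List.sum_toFinset _ List.nodup_range',
    List.range'_succ]
  simp [schedTime, checkpointPrefix, Op.duration, Function.comp_def]

theorem replay_insert_input {c : Chain} {s s' t m : ℕ} {S : List Op} (hs : 1 ≤ s)
    (hs' : s < s') (hv : Valid s' t S) (hp : Persistent s' t S) (hpk : PeakLE c s' t m S)
    (hx : execList (startMem s' t) S = some {Data.delta (s' - 1)}) :
    execList (insert (Data.a (s' - 1)) (startMem s t)) S = some (startMem s (s' - 1)) ∧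
      persistAux none (insert (Data.a (s' - 1)) (startMem s t)) S ∧
      PeakLEFrom c s (m + c.wa (s' - 1)) (insert (Data.a (s' - 1)) (startMem s t)) S := by
  have hsim : CommutesWithExec (insert (Data.a (s - 1))) S :=
    commutesWithExec_insert hs fun op h => by have := (hv.1 op h).1; omega
  have hfresh : ∀ ℓ, Op.Fnone ℓ ∈ S → ∀ P : Finset Data, Data.a (ℓ - 1) ∉ P →
      Data.a (ℓ - 1) ∉ insert (Data.a (s - 1)) P := by
    intro ℓ hℓ P hP
    have : s' ≤ ℓ := (hv.1 _ hℓ).1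
    simp only [Finset.mem_insert, Data.a.injEq, hP, or_false]
    omega
  rw [show insert (Data.a (s' - 1)) (startMem s t) = insert (Data.a (s - 1)) (startMem s' t) from
    Finset.insert_comm ..]
  exact ⟨hsim.execList_eq hx, hsim.persistAux_map hfresh hx hp,
    hsim.peakLEFrom_add (fun M N => Finset.insert_union_distrib _ M N)
      (memSize_insert_input_le c s s') hpk⟩

theorem optSched_checkpoint {c : Chain} {s s' t m : ℕ} {S₁ S₂ : List Op} (hs : 1 ≤ s)
    (hs' : s < s') (hs't : s' ≤ t) (hm : mNone c s t ≤ m)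
    (heq : Copt c s t m = ((∑ k ∈ Finset.Ico s s', c.uf k : ℕ) : ℕ∞)
      + Copt c s' t (m - c.wa (s' - 1)) + Copt c s (s' - 1) m)
    (h₁ : OptSched c s' t (m - c.wa (s' - 1)) S₁)
    (hx₁ : execList (startMem s' t) S₁ = some {Data.delta (s' - 1)})
    (h₂ : OptSched c s (s' - 1) m S₂)
    (hx₂ : execList (startMem s (s' - 1)) S₂ = some {Data.delta (s - 1)}) :
    OptSched c s t m (checkpointPrefix s s' ++ S₁ ++ S₂) ∧
      execList (startMem s t) (checkpointPrefix s s' ++ S₁ ++ S₂) =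
        some {Data.delta (s - 1)} := by
  obtain ⟨hv₁, hp₁, hpk₁, ht₁⟩ := h₁
  obtain ⟨hv₂, hp₂, hpk₂, ht₂⟩ := h₂
  obtain ⟨hx₁', hp₁', hpk₁'⟩ := replay_insert_input hs hs' hv₁ hp₁ hpk₁ hx₁
  have hpre := execList_checkpointPrefix hs hs' t
  have hx : execList (startMem s t) (checkpointPrefix s s' ++ S₁) =
      some (startMem s (s' - 1)) := by
    rw [execList_append _ hpre, hx₁']
  have hexec : execList (startMem s t) (checkpointPrefix s s' ++ S₁ ++ S₂) =
      some {Data.delta (s - 1)} := by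
    rw [execList_append _ hx, hx₂]
  have hwa := wa_le_mNone (c := c) (s := s) (t := t) (j := s' - 1) (by omega) (by omega)
  refine ⟨⟨⟨?_, _, hexec, by simp⟩, ?_, ?_, ?_⟩, hexec⟩
  · simp only [List.mem_append]
    rintro op ((h | h) | h)
    · have := stage_mem_checkpointPrefix hs' h; omega
    · have := hv₁.1 op h; omega
    · have := hv₂.1 op h; omega
  · exact persistAux_append hx
      (persistAux_append hpre (persistAux_checkpointPrefix hs s' t _) hp₁') hp₂
  · exact (((peakLEFrom_checkpointPrefix hs hs' hs't).mono hm).append hpre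
      (hpk₁'.mono (by omega))).append hx hpk₂
  · rw [schedTime_append, schedTime_append, schedTime_checkpointPrefix c hs', heq, ← ht₁,
      ← ht₂]
    push_cast
    rfl

theorem exists_optSched {c : Chain} {s t m : ℕ} (hs : 1 ≤ s) (hst : s ≤ t)
    (hfin : Copt c s t m < ⊤) :
    ∃ S, OptSched c s t m S ∧ execList (startMem s t) S = some {Data.delta (s - 1)} := by
  rcases hst.eq_or_lt with rfl | hst
  · exact ⟨_, optSched_base hs (mAll_le_of_Copt_self_lt_top hfin)⟩
  rcases Copt_eq_checkpoint_or_storeAll hst hfin with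
    ⟨s', hs', hs't, hm, heq⟩ | ⟨hm, heq⟩ <;>
    rw [heq, ENat.add_lt_top, ENat.add_lt_top] at hfin
  · obtain ⟨⟨-, hfin₁⟩, hfin₂⟩ := hfin
    obtain ⟨S₁, hS₁, hx₁⟩ := exists_optSched (by omega) hs't hfin₁
    obtain ⟨S₂, hS₂, hx₂⟩ := exists_optSched hs (by omega) hfin₂
    exact ⟨_, optSched_checkpoint hs hs' hs't hm heq hS₁ hx₁ hS₂ hx₂⟩
  · obtain ⟨⟨-, hfin₁⟩, -⟩ := hfin
    obtain ⟨S₁, hS₁, hx₁⟩ := exists_optSched (by omega) hst hfin₁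
    exact ⟨_, optSched_storeAll hs hst hm heq hS₁ hx₁⟩
termination_by t - s

theorem optRec_correct_general (c : Chain) (s t m : ℕ)
    (h1 : 1 ≤ s) (h2 : s < t)
    (hfin : Copt c s t m < ⊤) :
    (∀ s', s + 1 ≤ s' → s' ≤ t → mNone c s t ≤ m →
      Copt c s t m = ((∑ k ∈ Finset.Ico s s', c.uf k : ℕ) : ℕ∞)
          + Copt c s' t (m - c.wa (s' - 1)) + Copt c s (s' - 1) m →
      ∃ S₁ S₂ : List Op,
        OptSched c s' t (m - c.wa (s' - 1)) S₁ ∧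
        OptSched c s (s' - 1) m S₂ ∧
        OptSched c s t m
          ((Op.Fck s :: (List.range' (s + 1) (s' - s - 1)).map Op.Fnone) ++ S₁ ++ S₂))
    ∧ (mAll c s t ≤ m →
      Copt c s t m = ((c.uf s : ℕ) : ℕ∞) + Copt c (s + 1) t (m - c.wbar s)
          + ((c.ub s : ℕ) : ℕ∞) →
      ∃ S₁ : List Op,
        OptSched c (s + 1) t (m - c.wbar s) S₁ ∧
        OptSched c s t m (Op.Fall s :: (S₁ ++ [Op.B s]))) := by
  refine ⟨fun s' hs' hs't hm heq => ?_, fun hm heq => ?_⟩ <;>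
    rw [heq, ENat.add_lt_top, ENat.add_lt_top] at hfin
  · obtain ⟨⟨-, hfin₁⟩, hfin₂⟩ := hfin
    obtain ⟨S₁, hS₁, hx₁⟩ := exists_optSched (by omega) hs't hfin₁
    obtain ⟨S₂, hS₂, hx₂⟩ := exists_optSched h1 (by omega) hfin₂
    exact ⟨S₁, S₂, hS₁, hS₂,
      (optSched_checkpoint h1 hs' hs't hm heq hS₁ hx₁ hS₂ hx₂).1⟩
  · obtain ⟨⟨-, hfin₁⟩, -⟩ := hfin
    obtain ⟨S₁, hS₁, hx₁⟩ := exists_optSched (by omega) h2 hfin₁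
    exact ⟨S₁, hS₁, (optSched_storeAll h1 h2 hm heq hS₁ hx₁).1⟩

/-- For all `1 ≤ s < t ≤ L+1` and `m` with
`C_opt(s,t,m) < ∞`, the recursive extraction procedure `OptRec` returns a
valid memory-persistent schedule for the subchain from `s` to `t`:
if the minimum is attained by the checkpoint branch with split point `s'`
(i.e. `m ≥ m_∅(s,t)` and
`C_opt(s,t,m) = Σ_{k=s}^{s'-1} uf k + C_opt(s',t,m - wa (s'-1)) + C_opt(s,s'-1,m)`),
it returns the concatenation of `(F_ck s, F_ø (s+1), …, F_ø (s'-1))`, an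
optimal schedule for the subchain from `s'` to `t` with memory `m - wa (s'-1)`
and an optimal schedule for the subchain from `s` to `s'-1` with memory `m`;
if the minimum is attained by the store-all branch (i.e. `m ≥ m_all(s,t)` and
`C_opt(s,t,m) = uf s + C_opt(s+1,t,m - wā s) + ub s`), it returns `F_all s`
followed by an optimal schedule for the subchain from `s+1` to `t` with memory
`m - wā s`, followed by `B s`.  The returned schedule has peak memory at most
`m` and computation time exactly `C_opt(s,t,m)`. -/
theorem optRec_correct (c : Chain) (s t m : ℕ)
    (h1 : 1 ≤ s) (h2 : s < t) (h3 : t ≤ c.L + 1)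
    (hfin : Copt c s t m < ⊤) :
    (∀ s', s + 1 ≤ s' → s' ≤ t → mNone c s t ≤ m →
      Copt c s t m = ((∑ k ∈ Finset.Ico s s', c.uf k : ℕ) : ℕ∞)
          + Copt c s' t (m - c.wa (s' - 1)) + Copt c s (s' - 1) m →
      ∃ S₁ S₂ : List Op,
        OptSched c s' t (m - c.wa (s' - 1)) S₁ ∧
        OptSched c s (s' - 1) m S₂ ∧
        OptSched c s t m
          ((Op.Fck s :: (List.range' (s + 1) (s' - s - 1)).map Op.Fnone) ++ S₁ ++ S₂))
    ∧ (mAll c s t ≤ m →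
      Copt c s t m = ((c.uf s : ℕ) : ℕ∞) + Copt c (s + 1) t (m - c.wbar s)
          + ((c.ub s : ℕ) : ℕ∞) →
      ∃ S₁ : List Op,
        OptSched c (s + 1) t (m - c.wbar s) S₁ ∧
        OptSched c s t m (Op.Fall s :: (S₁ ++ [Op.B s]))) :=
  optRec_correct_general c s t m h1 h2 hfin

end Checkpoint
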